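/- (Theorem 1, equilibrium part.) Assume H is invertible and let x_0 ∈ ℝⁿ. Define, for each player i, the control u*_i(t) = −(1/(r_i·d_i))·B̂_iᵀ·exp((T−t)Λᵀ)·L̂_i·H⁻¹·exp(TΛ)·x_0 for t ∈ [0,T], and u*_i(t) = 0 for t ∉ [0,T]. Then u* = (u*_1,…,u*_n) is an open-loop Nash equilibrium of the delayed game (the non-stubborn opinion-formation game) with initial opinion vector x_0. -/

import Mathlib

open Matrix MeasureTheory
open scoped Matrix

noncomputable section

/-- The matrix exponential of a real `n × n` matrix. -/
def mexp {n : ℕ} (A : Matrix (Fin n) (Fin n) ℝ) : Matrix (Fin n) (Fin n) ℝ :=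
  NormedSpace.exp A

/-- An admissible control of the delayed game: a bounded measurable function `u : ℝ → ℝ`
with `u s = 0` for `s < 0`. -/
def AdmissibleD (u : ℝ → ℝ) : Prop :=
  Measurable u ∧ (∃ C, ∀ s, |u s| ≤ C) ∧ ∀ s < 0, u s = 0

/-- An admissible control of the delay-free game: a bounded measurable function. -/
def AdmissibleF (u : ℝ → ℝ) : Prop :=
  Measurable u ∧ ∃ C, ∀ s, |u s| ≤ C

/-- Data of the differential games of opinion formation: the system matrix `Λ`
(the continuous-time Hegselmann–Krause matrix `Λ = D⁻¹A − I`), the input delay `τ`,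
the terminal time `tf`, and for each player `i` the input vector `B i`, the control
weight `r i`, the neighborhood size `d i = |𝒩ᵢ|`, the agent-`i` graph Laplacian `L i`
and the stubbornness coefficient `ω i`. -/
structure GameData (n : ℕ) where
  Λ : Matrix (Fin n) (Fin n) ℝ
  τ : ℝ
  tf : ℝ
  B : Fin n → Fin n → ℝ
  r : Fin n → ℝ
  d : Fin n → ℝ
  L : Fin n → Matrix (Fin n) (Fin n) ℝ
  ω : Fin n → ℝ

namespace GameData

variable {n : ℕ} (G : GameData n)

/-- The standing hypotheses: `τ ≥ 0`, `t_f > τ`, `rᵢ > 0`, `dᵢ > 0`, each `Lᵢ` symmetric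
positive semidefinite, and `ωᵢ ∈ [0,1]`. -/
def Valid : Prop :=
  0 ≤ G.τ ∧ G.τ < G.tf ∧ (∀ i, 0 < G.r i) ∧ (∀ i, 0 < G.d i) ∧
    (∀ i, (G.L i).PosSemidef) ∧ ∀ i, G.ω i ∈ Set.Icc (0 : ℝ) 1

/-- `T = t_f − τ`. -/
def T : ℝ := G.tf - G.τ

/-- `B̂ᵢ = exp(−τΛ)·Bᵢ`. -/
def Bhat (i : Fin n) : Fin n → ℝ := (mexp ((-G.τ) • G.Λ)).mulVec (G.B i)

/-- `L̂ᵢ = exp(τΛᵀ)·Lᵢ·exp(τΛ)`. -/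
def Lhat (i : Fin n) : Matrix (Fin n) (Fin n) ℝ :=
  mexp (G.τ • G.Λᵀ) * G.L i * mexp (G.τ • G.Λ)

/-- `Sᵢ = (1/rᵢ)·B̂ᵢ·B̂ᵢᵀ`. -/
def S (i : Fin n) : Matrix (Fin n) (Fin n) ℝ :=
  (1 / G.r i) • vecMulVec (G.Bhat i) (G.Bhat i)

/-- The matrix `∫₀ᵗ exp((t−s)Λ)·Sᵢ·exp((T−s)Λᵀ) ds` (entrywise integral). -/
def Phi (T' : ℝ) (i : Fin n) (t : ℝ) : Matrix (Fin n) (Fin n) ℝ :=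
  Matrix.of fun a b =>
    ∫ s in (0:ℝ)..t, (mexp ((t - s) • G.Λ) * G.S i * mexp ((T' - s) • G.Λᵀ)) a b

/-- `Ψᵢ = ∫₀ᵀ exp((T−s)Λ)·Sᵢ·exp((T−s)Λᵀ) ds` with `T = t_f − τ`. -/
def Psi (i : Fin n) : Matrix (Fin n) (Fin n) ℝ := G.Phi G.T i G.T

/-- `H = I + ∑ⱼ (1/dⱼ)·Ψⱼ·L̂ⱼ`. -/
def H : Matrix (Fin n) (Fin n) ℝ :=
  1 + ∑ j : Fin n, (1 / G.d j) • (G.Psi j * G.Lhat j)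

/-- `Wᵢ`: the matrix whose `(i,i)` entry is `ωᵢ` and all other entries are `0`. -/
def W (i : Fin n) : Matrix (Fin n) (Fin n) ℝ := Matrix.single i i (G.ω i)

/-- `Ŵᵢ = exp(τΛᵀ)·Wᵢ·exp(τΛ)`. -/
def What (i : Fin n) : Matrix (Fin n) (Fin n) ℝ :=
  mexp (G.τ • G.Λᵀ) * G.W i * mexp (G.τ • G.Λ)

/-- `Ĥ = I + ∑ⱼ Ψⱼ·(Ŵⱼ + ((1−ωⱼ)/dⱼ)·L̂ⱼ)`. -/
def Hhat : Matrix (Fin n) (Fin n) ℝ :=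
  1 + ∑ j : Fin n, G.Psi j * (G.What j + ((1 - G.ω j) / G.d j) • G.Lhat j)

/-- The trajectory of the delayed game:
`x_u(t) = exp(tΛ)·x₀ + ∫₀ᵗ exp((t−s)Λ)·(∑ⱼ Bⱼ·uⱼ(s−τ)) ds`. -/
def xtraj (x0 : Fin n → ℝ) (u : Fin n → ℝ → ℝ) (t : ℝ) : Fin n → ℝ :=
  (mexp (t • G.Λ)).mulVec x0 +
    ∫ s in (0:ℝ)..t, (mexp ((t - s) • G.Λ)).mulVec (∑ j : Fin n, u j (s - G.τ) • G.B j)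

/-- The trajectory of the delay-free game:
`y_u(t) = exp(tΛ)·y₀ + ∫₀ᵗ exp((t−s)Λ)·(∑ⱼ B̂ⱼ·uⱼ(s)) ds`. -/
def ytraj (y0 : Fin n → ℝ) (u : Fin n → ℝ → ℝ) (t : ℝ) : Fin n → ℝ :=
  (mexp (t • G.Λ)).mulVec y0 +
    ∫ s in (0:ℝ)..t, (mexp ((t - s) • G.Λ)).mulVec (∑ j : Fin n, u j s • G.Bhat j)

/-- Player `i`'s cost in the delayed game:
`Jᵢ(u) = (1/dᵢ)·x_u(t_f)ᵀ·Lᵢ·x_u(t_f) + ∫₀^{t_f} rᵢ·uᵢ(t−τ)² dt`. -/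
def J (x0 : Fin n → ℝ) (i : Fin n) (u : Fin n → ℝ → ℝ) : ℝ :=
  (1 / G.d i) * (G.xtraj x0 u G.tf ⬝ᵥ (G.L i).mulVec (G.xtraj x0 u G.tf)) +
    ∫ t in (0:ℝ)..G.tf, G.r i * u i (t - G.τ) ^ 2

/-- Player `i`'s cost in the delay-free game:
`Ĵᵢ(u) = (1/dᵢ)·y_u(T)ᵀ·L̂ᵢ·y_u(T) + ∫₀ᵀ rᵢ·uᵢ(t)² dt`. -/
def JF (y0 : Fin n → ℝ) (i : Fin n) (u : Fin n → ℝ → ℝ) : ℝ :=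
  (1 / G.d i) * (G.ytraj y0 u G.T ⬝ᵥ (G.Lhat i).mulVec (G.ytraj y0 u G.T)) +
    ∫ t in (0:ℝ)..G.T, G.r i * u i t ^ 2

/-- Player `i`'s stubborn cost in the delayed game. -/
def Jstub (x0 : Fin n → ℝ) (i : Fin n) (u : Fin n → ℝ → ℝ) : ℝ :=
  (G.xtraj x0 u G.tf - x0) ⬝ᵥ (G.W i).mulVec (G.xtraj x0 u G.tf - x0) +
    ((1 - G.ω i) / G.d i) * (G.xtraj x0 u G.tf ⬝ᵥ (G.L i).mulVec (G.xtraj x0 u G.tf)) +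
    ∫ t in (0:ℝ)..G.tf, G.r i * u i (t - G.τ) ^ 2

/-- Player `i`'s stubborn cost in the delay-free game, with reference opinion `x₀`. -/
def JstubF (x0 y0 : Fin n → ℝ) (i : Fin n) (u : Fin n → ℝ → ℝ) : ℝ :=
  ((mexp (G.τ • G.Λ)).mulVec (G.ytraj y0 u G.T) - x0) ⬝ᵥ
      (G.W i).mulVec ((mexp (G.τ • G.Λ)).mulVec (G.ytraj y0 u G.T) - x0) +
    ((1 - G.ω i) / G.d i) * (G.ytraj y0 u G.T ⬝ᵥ (G.Lhat i).mulVec (G.ytraj y0 u G.T)) +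
    ∫ t in (0:ℝ)..G.T, G.r i * u i t ^ 2

/-- Open-loop Nash equilibrium of the delayed game. -/
def NashD (x0 : Fin n → ℝ) (u : Fin n → ℝ → ℝ) : Prop :=
  (∀ i, AdmissibleD (u i)) ∧
    ∀ i, ∀ v : ℝ → ℝ, AdmissibleD v →
      G.J x0 i u ≤ G.J x0 i (Function.update u i v)

/-- Open-loop Nash equilibrium of the delay-free game. -/
def NashF (y0 : Fin n → ℝ) (u : Fin n → ℝ → ℝ) : Prop :=
  (∀ i, AdmissibleF (u i)) ∧
    ∀ i, ∀ v : ℝ → ℝ, AdmissibleF v →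
      G.JF y0 i u ≤ G.JF y0 i (Function.update u i v)

/-- Open-loop Nash equilibrium of the stubborn delayed game. -/
def NashStubD (x0 : Fin n → ℝ) (u : Fin n → ℝ → ℝ) : Prop :=
  (∀ i, AdmissibleD (u i)) ∧
    ∀ i, ∀ v : ℝ → ℝ, AdmissibleD v →
      G.Jstub x0 i u ≤ G.Jstub x0 i (Function.update u i v)

/-- Open-loop Nash equilibrium of the stubborn delay-free game. -/
def NashStubF (x0 y0 : Fin n → ℝ) (u : Fin n → ℝ → ℝ) : Prop :=
  (∀ i, AdmissibleF (u i)) ∧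
    ∀ i, ∀ v : ℝ → ℝ, AdmissibleF v →
      G.JstubF x0 y0 i u ≤ G.JstubF x0 y0 i (Function.update u i v)

end GameData

/-!
Substituting `σ = s - τ` turns the delayed game into the delay-free one: for controls that vanish
at negative times, `x_u(t_f) = exp(τΛ) y_u(T)` where `y_u` is driven by the `B̂ⱼ`, and
`yᵀ L̂ᵢ y = (exp(τΛ) y)ᵀ Lᵢ (exp(τΛ) y)`, so `Jᵢ = Ĵᵢ`. In the delay-free game player `i`'s cost is
a convex quadratic functional of its own control, hence any control satisfying the first-order
condition `rᵢ uᵢ(s) = -(1/dᵢ) (exp((T-s)Λ) B̂ᵢ)ᵀ L̂ᵢ y(T)` on `[0,T]` is a best response. The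
candidate profile satisfies it with `y(T) = η := H⁻¹ exp(TΛ) x₀`: integrating the candidate
controls gives `y(T) = exp(TΛ) x₀ - (H - I) η = η`.
-/

section MatrixExponential

variable {n : ℕ}

theorem continuous_mexp_smul (A : Matrix (Fin n) (Fin n) ℝ) :
    Continuous fun t : ℝ => mexp (t • A) := by
  open scoped Norms.Operator in
  exact NormedSpace.exp_continuous.comp (continuous_id.smul continuous_const)

theorem Continuous.mexp_smul {f : ℝ → ℝ} (hf : Continuous f) (A : Matrix (Fin n) (Fin n) ℝ) :
    Continuous fun t => mexp (f t • A) :=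
  (continuous_mexp_smul A).comp hf

theorem mexp_add_smul (A : Matrix (Fin n) (Fin n) ℝ) (s t : ℝ) :
    mexp ((s + t) • A) = mexp (s • A) * mexp (t • A) := by
  rw [mexp, mexp, mexp, add_smul]
  exact Matrix.exp_add_of_commute _ _ (((Commute.refl A).smul_left s).smul_right t)

theorem mexp_smul_mulVec_mexp_smul (A : Matrix (Fin n) (Fin n) ℝ) (s t : ℝ) (x : Fin n → ℝ) :
    mexp (s • A) *ᵥ (mexp (t • A) *ᵥ x) = mexp ((s + t) • A) *ᵥ x := by
  rw [mulVec_mulVec, mexp_add_smul]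

theorem transpose_mexp_smul (A : Matrix (Fin n) (Fin n) ℝ) (t : ℝ) :
    (mexp (t • A))ᵀ = mexp (t • Aᵀ) := by
  rw [mexp, mexp, ← Matrix.exp_transpose, transpose_smul]

end MatrixExponential

section VectorIntegral

variable {m ι : Type*} [Fintype m] [Fintype ι] {a b : ℝ} {f : ℝ → ι → ℝ}

theorem Matrix.mulVec_intervalIntegral (M : Matrix m ι ℝ)
    (hf : IntervalIntegrable f volume a b) :
    M *ᵥ (∫ s in a..b, f s) = ∫ s in a..b, M *ᵥ f s :=
  ((LinearMap.toContinuousLinearMap M.mulVecLin).intervalIntegral_comp_comm hf).symm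

theorem Matrix.dotProduct_intervalIntegral (c : ι → ℝ)
    (hf : IntervalIntegrable f volume a b) :
    c ⬝ᵥ (∫ s in a..b, f s) = ∫ s in a..b, c ⬝ᵥ f s :=
  ((LinearMap.toContinuousLinearMap (dotProductBilin ℝ ℝ c)).intervalIntegral_comp_comm hf).symm

theorem intervalIntegral_apply (hf : IntervalIntegrable f volume a b) (j : ι) :
    (∫ s in a..b, f s) j = ∫ s in a..b, f s j :=
  ((ContinuousLinearMap.proj (R := ℝ) j).intervalIntegral_comp_comm hf).symm

theorem Matrix.of_intervalIntegral_mulVec {M : ℝ → Matrix m ι ℝ} (hM : Continuous M)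
    (x : ι → ℝ) :
    Matrix.of (fun i j => ∫ s in a..b, M s i j) *ᵥ x = ∫ s in a..b, M s *ᵥ x := by
  ext i
  rw [intervalIntegral_apply ((hM.matrix_mulVec continuous_const).intervalIntegrable a b)]
  simp only [mulVec, dotProduct, of_apply]
  rw [intervalIntegral.integral_finsetSum (f := fun j s => M s i j * x j) fun j _ =>
    ((hM.matrix_elem i j).mul continuous_const).intervalIntegrable a b]
  simp only [intervalIntegral.integral_mul_const]

theorem intervalIntegral_comp_sub_of_eq_zero_of_neg {E : Type*} [NormedAddCommGroup E]
    [NormedSpace ℝ E] {g : ℝ → E} (hg : ∀ a b, IntervalIntegrable g volume a b)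
    (hg0 : ∀ s < 0, g s = 0) {τ : ℝ} (hτ : 0 ≤ τ) (b : ℝ) :
    ∫ s in (0:ℝ)..b, g (s - τ) = ∫ s in (0:ℝ)..(b - τ), g s := by
  have hvanish : ∫ s in -τ..0, g s = 0 := by
    refine intervalIntegral.integral_zero_ae ?_
    filter_upwards [Measure.ae_ne volume 0] with s hs0 hs
    rw [Set.uIoc_of_le (neg_nonpos.2 hτ)] at hs
    exact hg0 s (lt_of_le_of_ne hs.2 hs0)
  rw [intervalIntegral.integral_comp_sub_right, zero_sub,
    ← intervalIntegral.integral_add_adjacent_intervals (hg _ 0) (hg 0 _), hvanish, zero_add]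

end VectorIntegral

namespace AdmissibleF

variable {u v : ℝ → ℝ}

theorem intervalIntegrable (hu : AdmissibleF u) (a b : ℝ) : IntervalIntegrable u volume a b := by
  obtain ⟨hmeas, C, hC⟩ := hu
  rw [intervalIntegrable_iff]
  exact IntegrableOn.of_bound measure_Ioc_lt_top hmeas.aestronglyMeasurable C
    (ae_of_all _ fun s => (Real.norm_eq_abs _).trans_le (hC s))

theorem intervalIntegrable_smul {E : Type*} [NormedAddCommGroup E] [NormedSpace ℝ E]
    (hu : AdmissibleF u) {Φ : ℝ → E} (hΦ : Continuous Φ) (a b : ℝ) :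
    IntervalIntegrable (fun s => u s • Φ s) volume a b :=
  (hu.intervalIntegrable a b).smul_continuousOn hΦ.continuousOn

theorem mul (hu : AdmissibleF u) (hv : AdmissibleF v) : AdmissibleF fun s => u s * v s := by
  obtain ⟨hu, Cu, hCu⟩ := hu
  obtain ⟨hv, Cv, hCv⟩ := hv
  refine ⟨hu.mul hv, Cu * Cv, fun s => ?_⟩
  rw [abs_mul]
  exact mul_le_mul (hCu s) (hCv s) (abs_nonneg _) ((abs_nonneg _).trans (hCu s))

theorem sub (hu : AdmissibleF u) (hv : AdmissibleF v) : AdmissibleF fun s => u s - v s := by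
  obtain ⟨hu, Cu, hCu⟩ := hu
  obtain ⟨hv, Cv, hCv⟩ := hv
  exact ⟨hu.sub hv, Cu + Cv, fun s => (abs_sub _ _).trans (add_le_add (hCu s) (hCv s))⟩

end AdmissibleF

theorem AdmissibleD.admissibleF {u : ℝ → ℝ} (hu : AdmissibleD u) : AdmissibleF u :=
  ⟨hu.1, hu.2.1⟩

theorem admissibleD_indicator_Icc {f : ℝ → ℝ} (hf : Continuous f) (T : ℝ) :
    AdmissibleD ((Set.Icc 0 T).indicator f) := by
  obtain ⟨C, hC⟩ := (isCompact_Icc (a := 0) (b := T)).exists_bound_of_continuousOn hf.continuousOn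
  refine ⟨hf.measurable.indicator measurableSet_Icc, ⟨max C 0, fun s => ?_⟩, fun s hs => ?_⟩
  · by_cases hs : s ∈ Set.Icc 0 T
    · rw [Set.indicator_of_mem hs, ← Real.norm_eq_abs]
      exact (hC s hs).trans (le_max_left _ _)
    · simp [Set.indicator_of_notMem hs]
  · exact Set.indicator_of_notMem (fun h => (not_le.2 hs) h.1) _

theorem intervalIntegrable_mulVec_sum_smul {m ι κ : Type*} [Fintype m] [Fintype ι] [Fintype κ]
    {M : ℝ → Matrix m ι ℝ} (hM : Continuous M) {u : κ → ℝ → ℝ}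
    (hu : ∀ j, AdmissibleF (u j)) (v : κ → ι → ℝ) (a b : ℝ) :
    IntervalIntegrable (fun s => M s *ᵥ ∑ j, u j s • v j) volume a b := by
  simp_rw [mulVec_sum, mulVec_smul]
  simpa only [Finset.sum_fn] using IntervalIntegrable.sum Finset.univ fun j _ =>
    (hu j).intervalIntegrable_smul (hM.matrix_mulVec continuous_const) a b

theorem sum_update_apply_smul {ι M : Type*} [Fintype ι] [DecidableEq ι] [AddCommGroup M]
    [Module ℝ M] (u : ι → ℝ → ℝ) (i : ι) (v : ℝ → ℝ) (b : ι → M) (s : ℝ) :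
    ∑ j, Function.update u i v j s • b j = ∑ j, u j s • b j + (v s - u i s) • b i := by
  have hupdate : (fun j => Function.update u i v j s • b j) =
      Function.update (fun j => u j s • b j) i (v s • b i) := by
    funext j
    rcases eq_or_ne j i with rfl | hj <;> simp [*]
  rw [hupdate, Finset.sum_update_of_mem (Finset.mem_univ i),
    Finset.sum_eq_add_sum_sdiff_singleton_of_mem (Finset.mem_univ i), sub_smul]
  abel

theorem Matrix.PosSemidef.dotProduct_mulVec_comm {ι : Type*} [Fintype ι] {L : Matrix ι ι ℝ}
    (hL : L.PosSemidef) (x y : ι → ℝ) : x ⬝ᵥ L *ᵥ y = y ⬝ᵥ L *ᵥ x := by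
  have hsymm : Lᵀ = L := by
    simpa only [conjTranspose_eq_transpose_of_trivial] using hL.isHermitian.eq
  rw [← dotProduct_transpose_mulVec, hsymm]

theorem quadratic_cost_le_of_stationary {ι : Type*} [Fintype ι] {L : Matrix ι ι ℝ}
    (hL : L.PosSemidef) {c r T : ℝ} (hc : 0 ≤ c) (hr : 0 ≤ r) (hT : 0 ≤ T)
    {b : ℝ → ι → ℝ} (hb : Continuous b) {g v : ℝ → ℝ} (hg : AdmissibleF g)
    (hv : AdmissibleF v) (y : ι → ℝ)
    (hstat : ∀ s ∈ Set.Icc 0 T, r * g s = -(c * (b s ⬝ᵥ L *ᵥ y))) :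
    c * (y ⬝ᵥ L *ᵥ y) + ∫ s in (0:ℝ)..T, r * g s ^ 2 ≤
      c * ((y + ∫ s in (0:ℝ)..T, (v s - g s) • b s) ⬝ᵥ
          L *ᵥ (y + ∫ s in (0:ℝ)..T, (v s - g s) • b s)) +
        ∫ s in (0:ℝ)..T, r * v s ^ 2 := by
  set w := fun s => v s - g s with hw_def
  have hw : AdmissibleF w := hv.sub hg
  set δ := ∫ s in (0:ℝ)..T, w s • b s
  have hint : ∀ {p q : ℝ → ℝ}, AdmissibleF p → AdmissibleF q →
      IntervalIntegrable (fun s => r * (p s * q s)) volume 0 T :=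
    fun hp hq => ((hp.mul hq).intervalIntegrable 0 T).const_mul r
  have hδy : c * (δ ⬝ᵥ L *ᵥ y) = ∫ s in (0:ℝ)..T, w s * (c * (b s ⬝ᵥ L *ᵥ y)) := by
    rw [dotProduct_comm, Matrix.dotProduct_intervalIntegral _ (hw.intervalIntegrable_smul hb 0 T),
      ← intervalIntegral.integral_const_mul]
    refine intervalIntegral.integral_congr fun s _ => ?_
    simp only [smul_dotProduct, smul_eq_mul, dotProduct_comm (L *ᵥ y)]
    ring
  -- the stationarity condition makes the first variation vanish
  have hcross : c * (δ ⬝ᵥ L *ᵥ y) + ∫ s in (0:ℝ)..T, r * (g s * w s) = 0 := by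
    have hint_cross : IntervalIntegrable (fun s => w s * (c * (b s ⬝ᵥ L *ᵥ y))) volume 0 T :=
      hw.intervalIntegrable_smul (continuous_const.mul (hb.dotProduct continuous_const)) 0 T
    rw [hδy, ← intervalIntegral.integral_add hint_cross (hint hg hw)]
    refine intervalIntegral.integral_zero_ae (ae_of_all _ fun s hs => ?_)
    have := hstat s (Set.Ioc_subset_Icc_self ((Set.uIoc_of_le hT) ▸ hs))
    linear_combination w s * this
  have hquad : (y + δ) ⬝ᵥ L *ᵥ (y + δ) = y ⬝ᵥ L *ᵥ y + 2 * (δ ⬝ᵥ L *ᵥ y) + δ ⬝ᵥ L *ᵥ δ := by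
    rw [mulVec_add, dotProduct_add, add_dotProduct, add_dotProduct, hL.dotProduct_mulVec_comm y δ]
    ring
  have hrun : ∫ s in (0:ℝ)..T, r * v s ^ 2 = (∫ s in (0:ℝ)..T, r * g s ^ 2) +
      2 * (∫ s in (0:ℝ)..T, r * (g s * w s)) + ∫ s in (0:ℝ)..T, r * (w s * w s) := by
    have hsq : ∀ p : ℝ, p ^ 2 = p * p := sq
    simp only [hsq]
    rw [← intervalIntegral.integral_const_mul, ← intervalIntegral.integral_add (hint hg hg)
      ((hint hg hw).const_mul 2), ← intervalIntegral.integral_add ((hint hg hg).add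
      ((hint hg hw).const_mul 2)) (hint hw hw)]
    refine intervalIntegral.integral_congr fun s _ => ?_
    simp only [hw_def]
    ring
  have hδ : 0 ≤ δ ⬝ᵥ L *ᵥ δ := by simpa using hL.dotProduct_mulVec_nonneg δ
  have hw2 : 0 ≤ ∫ s in (0:ℝ)..T, r * (w s * w s) :=
    intervalIntegral.integral_nonneg hT fun s _ => mul_nonneg hr (mul_self_nonneg _)
  rw [hquad, hrun]
  linear_combination (exp := 1) (-2) * hcross + mul_nonneg hc hδ + hw2

namespace GameData

variable {n : ℕ} (G : GameData n)

theorem ytraj_update {u : Fin n → ℝ → ℝ} (hu : ∀ j, AdmissibleF (u j)) (i : Fin n)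
    {v : ℝ → ℝ} (hv : AdmissibleF v) (y0 : Fin n → ℝ) (t : ℝ) :
    G.ytraj y0 (Function.update u i v) t =
      G.ytraj y0 u t + ∫ s in (0:ℝ)..t, (v s - u i s) • (mexp ((t - s) • G.Λ) *ᵥ G.Bhat i) := by
  have hM : Continuous fun s : ℝ => mexp ((t - s) • G.Λ) :=
    (continuous_const.sub continuous_id).mexp_smul G.Λ
  simp only [ytraj, sum_update_apply_smul, mulVec_add, mulVec_smul]
  rw [intervalIntegral.integral_add (intervalIntegrable_mulVec_sum_smul hM hu _ 0 t)
    ((hv.sub (hu i)).intervalIntegrable_smul (hM.matrix_mulVec continuous_const) 0 t), add_assoc]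

def nashTerminalState (x0 : Fin n → ℝ) : Fin n → ℝ := G.H⁻¹ *ᵥ (mexp (G.T • G.Λ) *ᵥ x0)

def nashControl (x0 : Fin n → ℝ) (i : Fin n) (t : ℝ) : ℝ :=
  -(1 / (G.r i * G.d i)) *
    (G.Bhat i ⬝ᵥ mexp ((G.T - t) • G.Λᵀ) *ᵥ (G.Lhat i *ᵥ G.nashTerminalState x0))

theorem continuous_nashControl (x0 : Fin n → ℝ) (i : Fin n) : Continuous (G.nashControl x0 i) :=
  continuous_const.mul (continuous_const.dotProduct
    (((continuous_const.sub continuous_id).mexp_smul _).matrix_mulVec continuous_const))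

theorem Psi_mulVec (j : Fin n) (x : Fin n → ℝ) :
    G.Psi j *ᵥ x = ∫ s in (0:ℝ)..G.T,
      (mexp ((G.T - s) • G.Λ) * G.S j * mexp ((G.T - s) • G.Λᵀ)) *ᵥ x :=
  Matrix.of_intervalIntegral_mulVec ((((continuous_const.sub continuous_id).mexp_smul _).mul
    continuous_const).mul ((continuous_const.sub continuous_id).mexp_smul _)) x

theorem nashControl_smul {j : Fin n} (hr : G.r j ≠ 0) (x0 : Fin n → ℝ) (s : ℝ) :
    G.nashControl x0 j s • (mexp ((G.T - s) • G.Λ) *ᵥ G.Bhat j) =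
      -(1 / G.d j) • ((mexp ((G.T - s) • G.Λ) * G.S j * mexp ((G.T - s) • G.Λᵀ)) *ᵥ
        (G.Lhat j *ᵥ G.nashTerminalState x0)) := by
  rw [← mulVec_mulVec, ← mulVec_mulVec, S, smul_mulVec, vecMulVec_mulVec, op_smul_eq_smul,
    mulVec_smul, mulVec_smul, smul_smul, smul_smul, nashControl]
  congr 1
  field_simp

theorem ytraj_eq_nashTerminalState (hT : 0 ≤ G.T) (hr : ∀ j, G.r j ≠ 0) (hH : IsUnit G.H)
    {x0 : Fin n → ℝ} {u : Fin n → ℝ → ℝ} (hu : ∀ j, AdmissibleF (u j))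
    (heq : ∀ j, ∀ t ∈ Set.Icc 0 G.T, u j t = G.nashControl x0 j t) :
    G.ytraj x0 u G.T = G.nashTerminalState x0 := by
  set η := G.nashTerminalState x0 with hη
  have hHη : G.H *ᵥ η = mexp (G.T • G.Λ) *ᵥ x0 := by
    rw [hη, nashTerminalState, mulVec_mulVec,
      mul_nonsing_inv _ ((isUnit_iff_isUnit_det _).1 hH), one_mulVec]
  have hM : Continuous fun s : ℝ => mexp ((G.T - s) • G.Λ) :=
    (continuous_const.sub continuous_id).mexp_smul G.Λ
  have hcontrol : ∀ j, ∫ s in (0:ℝ)..G.T, u j s • (mexp ((G.T - s) • G.Λ) *ᵥ G.Bhat j) =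
      -(1 / G.d j) • (G.Psi j *ᵥ (G.Lhat j *ᵥ η)) := by
    intro j
    rw [Psi_mulVec, ← intervalIntegral.integral_smul]
    refine intervalIntegral.integral_congr fun s hs => ?_
    rw [Set.uIcc_of_le hT] at hs
    rw [heq j s hs, nashControl_smul _ (hr j)]
  calc G.ytraj x0 u G.T
      = mexp (G.T • G.Λ) *ᵥ x0 +
          ∑ j, ∫ s in (0:ℝ)..G.T, u j s • (mexp ((G.T - s) • G.Λ) *ᵥ G.Bhat j) := by
        simp only [ytraj, mulVec_sum, mulVec_smul]
        rw [intervalIntegral.integral_finsetSum fun j _ =>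
          (hu j).intervalIntegrable_smul (hM.matrix_mulVec continuous_const) 0 G.T]
    _ = mexp (G.T • G.Λ) *ᵥ x0 - (G.H - 1) *ᵥ η := by
        rw [Finset.sum_congr rfl fun j _ => hcontrol j, H, add_sub_cancel_left, sum_mulVec,
          sub_eq_add_neg, ← Finset.sum_neg_distrib]
        simp only [smul_mulVec, mulVec_mulVec, neg_smul]
    _ = η := by rw [sub_mulVec, hHη, one_mulVec, sub_sub_cancel]

theorem mul_nashControl {i : Fin n} (hr : G.r i ≠ 0) (x0 : Fin n → ℝ) (s : ℝ) :
    G.r i * G.nashControl x0 i s = -(1 / G.d i *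
      ((mexp ((G.T - s) • G.Λ) *ᵥ G.Bhat i) ⬝ᵥ G.Lhat i *ᵥ G.nashTerminalState x0)) := by
  rw [nashControl, ← transpose_mexp_smul, dotProduct_transpose_mulVec, dotProduct_comm]
  field_simp

theorem posSemidef_Lhat {i : Fin n} (hL : (G.L i).PosSemidef) : (G.Lhat i).PosSemidef := by
  have h := hL.conjTranspose_mul_mul_same (mexp (G.τ • G.Λ))
  rwa [conjTranspose_eq_transpose_of_trivial, transpose_mexp_smul] at h

theorem nashF_of_eqOn_nashControl (hT : 0 ≤ G.T) (hr : ∀ j, 0 < G.r j) (hd : ∀ j, 0 < G.d j)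
    (hL : ∀ j, (G.L j).PosSemidef) (hH : IsUnit G.H) {x0 : Fin n → ℝ}
    {u : Fin n → ℝ → ℝ} (hu : ∀ j, AdmissibleF (u j))
    (heq : ∀ j, ∀ t ∈ Set.Icc 0 G.T, u j t = G.nashControl x0 j t) :
    G.NashF x0 u := by
  refine ⟨hu, fun i v hv => ?_⟩
  have hb : Continuous fun s : ℝ => mexp ((G.T - s) • G.Λ) *ᵥ G.Bhat i :=
    ((continuous_const.sub continuous_id).mexp_smul G.Λ).matrix_mulVec continuous_const
  have hstat : ∀ s ∈ Set.Icc 0 G.T, G.r i * u i s = -(1 / G.d i *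
      ((mexp ((G.T - s) • G.Λ) *ᵥ G.Bhat i) ⬝ᵥ G.Lhat i *ᵥ G.nashTerminalState x0)) :=
    fun s hs => by rw [heq i s hs, G.mul_nashControl (hr i).ne']
  have hmin := quadratic_cost_le_of_stationary (G.posSemidef_Lhat (hL i))
    (one_div_nonneg.2 (hd i).le) (hr i).le hT hb (hu i) hv _ hstat
  simpa only [JF, ytraj_update _ hu i hv,
    ytraj_eq_nashTerminalState _ hT (fun j => (hr j).ne') hH hu heq, Function.update_self]
    using hmin

theorem xtraj_tf_eq_mexp_mulVec_ytraj (hτ : 0 ≤ G.τ) {u : Fin n → ℝ → ℝ}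
    (hu : ∀ j, AdmissibleD (u j)) (x0 : Fin n → ℝ) :
    G.xtraj x0 u G.tf = mexp (G.τ • G.Λ) *ᵥ G.ytraj x0 u G.T := by
  have hT : G.tf - G.τ = G.T := rfl
  have htf : G.τ + G.T = G.tf := add_sub_cancel G.τ G.tf
  have hM : Continuous fun s : ℝ => mexp ((G.T - s) • G.Λ) :=
    (continuous_const.sub continuous_id).mexp_smul G.Λ
  set F := fun σ => mexp ((G.T - σ) • G.Λ) *ᵥ ∑ j, u j σ • G.B j with hF_def
  have hF : ∀ a b, IntervalIntegrable F volume a b :=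
    intervalIntegrable_mulVec_sum_smul hM (fun j => (hu j).admissibleF) _
  have hF0 : ∀ σ < 0, F σ = 0 := fun σ hσ => by simp [hF_def, (hu _).2.2 σ hσ]
  have hshift : ∫ s in (0:ℝ)..G.tf, mexp ((G.tf - s) • G.Λ) *ᵥ ∑ j, u j (s - G.τ) • G.B j =
      ∫ σ in (0:ℝ)..G.T, F σ := by
    rw [← hT, ← intervalIntegral_comp_sub_of_eq_zero_of_neg hF hF0 hτ]
    refine intervalIntegral.integral_congr fun s _ => ?_
    simp only [hF_def, ← hT, sub_sub_sub_cancel_right]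
  rw [xtraj, ytraj, mulVec_add, mexp_smul_mulVec_mexp_smul, hshift,
    Matrix.mulVec_intervalIntegral _ (intervalIntegrable_mulVec_sum_smul hM
      (fun j => (hu j).admissibleF) _ _ _), htf]
  congr 1
  refine intervalIntegral.integral_congr fun σ _ => ?_
  simp only [hF_def, Bhat, mulVec_sum, mulVec_smul, mexp_smul_mulVec_mexp_smul]
  rw [show G.τ + (G.T - σ + -G.τ) = G.T - σ by ring]

theorem J_eq_JF (hτ : 0 ≤ G.τ) {u : Fin n → ℝ → ℝ} (hu : ∀ j, AdmissibleD (u j))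
    (x0 : Fin n → ℝ) (i : Fin n) : G.J x0 i u = G.JF x0 i u := by
  have hquad : ∀ y, y ⬝ᵥ G.Lhat i *ᵥ y =
      (mexp (G.τ • G.Λ) *ᵥ y) ⬝ᵥ G.L i *ᵥ (mexp (G.τ • G.Λ) *ᵥ y) := fun y => by
    rw [Lhat, ← mulVec_mulVec, ← mulVec_mulVec, ← transpose_mexp_smul,
      dotProduct_transpose_mulVec, dotProduct_comm]
  have hui := (hu i).admissibleF
  have hrun : ∫ t in (0:ℝ)..G.tf, G.r i * u i (t - G.τ) ^ 2 =
      ∫ t in (0:ℝ)..G.T, G.r i * u i t ^ 2 :=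
    intervalIntegral_comp_sub_of_eq_zero_of_neg (g := fun t => G.r i * u i t ^ 2)
      (fun a b => by simpa only [sq] using ((hui.mul hui).intervalIntegrable a b).const_mul _)
      (fun s hs => by simp [(hu i).2.2 s hs]) hτ G.tf
  rw [J, JF, G.xtraj_tf_eq_mexp_mulVec_ytraj hτ hu, hquad, hrun]

theorem nashD_of_nashF (hτ : 0 ≤ G.τ) {x0 : Fin n → ℝ} {u : Fin n → ℝ → ℝ}
    (hu : ∀ j, AdmissibleD (u j)) (h : G.NashF x0 u) : G.NashD x0 u := by
  refine ⟨hu, fun i v hv => ?_⟩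
  have hupdate : ∀ j, AdmissibleD (Function.update u i v j) := by
    intro j
    rcases eq_or_ne j i with rfl | hj
    · simpa using hv
    · simpa [hj] using hu j
  rw [G.J_eq_JF hτ hu, G.J_eq_JF hτ hupdate]
  exact h.2 i v hv.admissibleF

end GameData

/-- Theorem 1, equilibrium part: if `H` is invertible, the profile
`u*ᵢ(t) = −(1/(rᵢdᵢ))·B̂ᵢᵀ·exp((T−t)Λᵀ)·L̂ᵢ·H⁻¹·exp(TΛ)·x₀` on `[0,T]` (and `0` outside)
is an open-loop Nash equilibrium of the delayed (non-stubborn) game with initial opinion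
vector `x₀`. -/
theorem statement_11 {n : ℕ} (G : GameData n) (hG : G.Valid) (hH : IsUnit G.H)
    (x0 : Fin n → ℝ) (u : Fin n → ℝ → ℝ)
    (hu1 : ∀ i, ∀ t ∈ Set.Icc (0:ℝ) G.T, u i t =
      -(1 / (G.r i * G.d i)) *
        (G.Bhat i ⬝ᵥ (mexp ((G.T - t) • G.Λᵀ)).mulVec
          ((G.Lhat i).mulVec (G.H⁻¹.mulVec ((mexp (G.T • G.Λ)).mulVec x0)))))
    (hu2 : ∀ i, ∀ t, t ∉ Set.Icc (0:ℝ) G.T → u i t = 0) :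
    G.NashD x0 u := by
  have hu : ∀ i, u i = (Set.Icc 0 G.T).indicator (G.nashControl x0 i) := fun i => by
    funext t
    by_cases ht : t ∈ Set.Icc 0 G.T
    · rw [Set.indicator_of_mem ht]
      exact hu1 i t ht
    · rw [Set.indicator_of_notMem ht]
      exact hu2 i t ht
  have hadm : ∀ i, AdmissibleD (u i) := fun i => by
    rw [hu i]
    exact admissibleD_indicator_Icc (G.continuous_nashControl x0 i) G.T
  obtain ⟨hτ, hτtf, hr, hd, hL, -⟩ := hG
  exact G.nashD_of_nashF hτ hadm (G.nashF_of_eqOn_nashControl (sub_nonneg.2 hτtf.le) hr hd hL hH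
    (fun i => (hadm i).admissibleF) hu1)
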